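/- (Lemma 2, strict stability.) Let w, w* ∈ ℝ^d satisfy 0 < ‖w − w*‖ < ‖w*‖ (so w ≠ w* and, necessarily, w ≠ 0), let θ = arccos(⟨w,w*⟩/(‖w‖‖w*‖)) ∈ [0,π], and define Δw = (1/2)(w* − w) + (1/(2π)) · ( ‖w*‖ (sin θ) (w/‖w‖) − θ w* ). Then ⟨w − w*, Δw⟩ < 0. -/

import Mathlib

open Real
open scoped RealInnerProductSpace
open InnerProductGeometry

/-!
Write `a = ‖w‖`, `b = ‖w*‖`, `θ` for the angle between `w` and `w*`, and `u = a - b cos θ`, so that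
`‖w - w*‖² = u² + (b sin θ)²`. Expanding, `2π ⟨w - w*, Δw⟩ = b u (sin θ - θ cos θ) + θ (b sin θ)² - π ‖w - w*‖²`.
The ball condition forces `⟨w, w*⟩ > 0`, i.e. `θ ≤ π/2`, where `0 ≤ sin θ - θ cos θ ≤ sin θ`
(as `θ ≤ tan θ`). Then AM-GM bounds the first two terms by `(1 + π)/2 · ‖w - w*‖² < π ‖w - w*‖²`.
-/

theorem Real.mul_cos_le_sin {x : ℝ} (h0 : 0 ≤ x) (h1 : x ≤ π / 2) : x * cos x ≤ sin x := by
  rcases h1.lt_or_eq with h1 | rfl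
  · have hcos : 0 < cos x := cos_pos_of_mem_Ioo ⟨by linarith, h1⟩
    calc x * cos x ≤ tan x * cos x := mul_le_mul_of_nonneg_right (le_tan h0 h1) hcos.le
      _ = sin x := by rw [tan_eq_sin_div_cos, div_mul_cancel₀ _ hcos.ne']
  · simp

theorem lyapunov_bracket_lt {b u θ : ℝ} (hb : 0 ≤ b) (hθ0 : 0 ≤ θ) (hθ : θ ≤ π / 2)
    (hX : 0 < u ^ 2 + (b * sin θ) ^ 2) :
    b * u * (sin θ - θ * cos θ) + θ * (b * sin θ) ^ 2 < π * (u ^ 2 + (b * sin θ) ^ 2) := by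
  have hcos : 0 ≤ cos θ := cos_nonneg_of_neg_pi_div_two_le_of_le (by linarith [pi_pos]) hθ
  have hgap : 0 ≤ sin θ - θ * cos θ := sub_nonneg.2 (mul_cos_le_sin hθ0 hθ)
  have hcross : b * u * (sin θ - θ * cos θ) ≤ |u| * (b * sin θ) :=
    calc b * u * (sin θ - θ * cos θ) ≤ b * |u| * (sin θ - θ * cos θ) := by
          gcongr; exact le_abs_self u
      _ ≤ b * |u| * sin θ := by
          gcongr; nlinarith [mul_nonneg hθ0 hcos]
      _ = |u| * (b * sin θ) := by ring
  have hamgm : |u| * (b * sin θ) ≤ (u ^ 2 + (b * sin θ) ^ 2) / 2 := by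
    nlinarith [sq_nonneg (|u| - b * sin θ), sq_abs u]
  have hangle : θ * (b * sin θ) ^ 2 ≤ π / 2 * (u ^ 2 + (b * sin θ) ^ 2) :=
    mul_le_mul hθ (by nlinarith [sq_nonneg u]) (sq_nonneg _) (by linarith [pi_pos])
  nlinarith [pi_gt_three]

section InnerProductSpace

variable {E : Type*} [NormedAddCommGroup E] [InnerProductSpace ℝ E]

/-- `Δw` of Lemma 1; `θ = arccos (⟪w, w*⟫ / (‖w‖ ‖w*‖))` is `angle w w*`. -/
noncomputable def reluExpectedUpdate (w wstar : E) : E :=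
  (1 / 2 : ℝ) • (wstar - w) + (1 / (2 * π)) •
    ((‖wstar‖ * sin (angle w wstar)) • (‖w‖⁻¹ • w) - angle w wstar • wstar)

theorem norm_sub_sq_eq_angle (x y : E) :
    ‖x - y‖ ^ 2 = (‖x‖ - ‖y‖ * cos (angle x y)) ^ 2 + (‖y‖ * sin (angle x y)) ^ 2 := by
  have hlaw := norm_sub_sq_eq_norm_sq_add_norm_sq_sub_two_mul_norm_mul_norm_mul_cos_angle x y
  linear_combination hlaw - ‖y‖ ^ 2 * sin_sq_add_cos_sq (angle x y)

theorem real_inner_pos_of_norm_sub_lt_norm {x y : E} (h : ‖x - y‖ < ‖y‖) : 0 < ⟪x, y⟫ := by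
  have h2 : ‖x - y‖ ^ 2 < ‖y‖ ^ 2 := by gcongr
  rw [norm_sub_sq_real] at h2
  nlinarith [sq_nonneg ‖x‖]

theorem angle_le_pi_div_two_of_real_inner_nonneg {x y : E} (h : 0 ≤ ⟪x, y⟫) :
    angle x y ≤ π / 2 :=
  arccos_le_pi_div_two.2 (div_nonneg h (by positivity))

theorem inner_sub_reluExpectedUpdate {w : E} (wstar : E) (hw : w ≠ 0) :
    ⟪w - wstar, reluExpectedUpdate w wstar⟫ =
      (‖wstar‖ * (‖w‖ - ‖wstar‖ * cos (angle w wstar)) *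
          (sin (angle w wstar) - angle w wstar * cos (angle w wstar))
        + angle w wstar * (‖wstar‖ * sin (angle w wstar)) ^ 2
        - π * ‖w - wstar‖ ^ 2) / (2 * π) := by
  have hcos := cos_angle_mul_norm_mul_norm w wstar
  simp only [reluExpectedUpdate, inner_add_right, inner_sub_right, real_inner_smul_right,
    inner_sub_left, real_inner_self_eq_norm_sq, real_inner_comm w wstar, norm_sub_sq_real]
  rw [← hcos]
  field_simp
  linear_combination (-(angle w wstar * ‖wstar‖ ^ 2)) * sin_sq_add_cos_sq (angle w wstar)

end InnerProductSpace

/-- Lemma 2 (strict stability): for `w, w*` with `0 < ‖w - w*‖ < ‖w*‖`,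
the Lyapunov derivative `⟨w - w*, Δw⟩` along the expected dynamics
`Δw = (1/2)(w* - w) + (1/(2π))(‖w*‖ (sin θ)(w/‖w‖) - θ w*)` is strictly negative. -/
theorem stmt_11 (d : ℕ) (w wstar : EuclideanSpace ℝ (Fin d))
    (h0 : 0 < ‖w - wstar‖) (hball : ‖w - wstar‖ < ‖wstar‖)
    (θ : ℝ) (hθ : θ = Real.arccos (⟪w, wstar⟫ / (‖w‖ * ‖wstar‖)))
    (Δw : EuclideanSpace ℝ (Fin d))
    (hΔw : Δw = (1 / 2 : ℝ) • (wstar - w)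
        + (1 / (2 * π)) • ((‖wstar‖ * Real.sin θ) • (‖w‖⁻¹ • w) - θ • wstar)) :
    ⟪w - wstar, Δw⟫ < 0 := by
  have hangle : θ = angle w wstar := hθ
  subst hangle
  have hΔw' : Δw = reluExpectedUpdate w wstar := hΔw
  have hw : w ≠ 0 := by
    rintro rfl
    simp at hball
  have hacute :=
    angle_le_pi_div_two_of_real_inner_nonneg (real_inner_pos_of_norm_sub_lt_norm hball).le
  have hbracket := lyapunov_bracket_lt (norm_nonneg wstar) (angle_nonneg w wstar) hacute
    (u := ‖w‖ - ‖wstar‖ * cos (angle w wstar)) (by rw [← norm_sub_sq_eq_angle]; positivity)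
  rw [← norm_sub_sq_eq_angle] at hbracket
  rw [hΔw', inner_sub_reluExpectedUpdate wstar hw]
  exact div_neg_of_neg_of_pos (by linarith) (by positivity)
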